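/- arXiv:2007.00967 — 5 statements merged into one kernel-verified Lean document; each statement's English description precedes it below -/
import Mathlib

section
/- Let G be a finite group, p a prime, and P a Sylow p-subgroup of G. Then |𝔘_p(G)| = Σ_{x ∈ P} n_p(G)/λ_G(x), where the sum is of rational numbers (each λ_G(x) is nonzero since x lies in some Sylow p-subgroup). -/
open Subgroup

/-- `λ_G(x)`: the number of Sylow `p`-subgroups of `G` containing `x`. -/
noncomputable def sylCount (p : ℕ) {G : Type*} [Group G] (x : G) : ℕ :=
  Nat.card {Q : Sylow p G // x ∈ Q}

/-!
Double count the pairs `(x, Q)` with `Q` a Sylow `p`-subgroup and `x ∈ Q`, weighting each pair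
by `1 / λ(x)`. Summing over `x` first, every element lying in some Sylow subgroup, that is every
`p`-element, contributes exactly `1`. Summing over `Q` first gives `Σ_Q Σ_{x ∈ Q} 1 / λ(x)`; since
`λ` is a class function and all Sylow subgroups are conjugate, the inner sum does not depend on
`Q`, so the total is `n_p · Σ_{x ∈ P} 1 / λ(x)`.
-/

open Finset Pointwise

theorem Nat.card_setOf_exists_eq_finsum_finsum_inv_card {α β K : Type*} [Finite α] [Finite β]
    [DivisionSemiring K] [CharZero K] (r : α → β → Prop) :
    (Nat.card {a | ∃ b, r a b} : K) =
      ∑ᶠ b, ∑ᶠ a ∈ {a | r a b}, (Nat.card {b // r a b} : K)⁻¹ := by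
  classical
  have := Fintype.ofFinite α
  have := Fintype.ofFinite β
  rw [Nat.card_eq_card_toFinset, Set.toFinset_ofPred]
  simp_rw [finsum_mem_eq_toFinset_sum, finsum_eq_sum_of_fintype, Set.toFinset_ofPred,
    Nat.card_eq_fintype_card, Fintype.card_subtype, sum_filter]
  rw [sum_comm, card_filter]
  push_cast
  refine sum_congr rfl fun a _ => ?_
  rw [← sum_filter, sum_const, nsmul_eq_mul]
  split_ifs with h
  · obtain ⟨b, hb⟩ := h
    have hcard : #{b | r a b} ≠ 0 := card_ne_zero_of_mem <| mem_filter.2 ⟨mem_univ b, hb⟩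
    exact (mul_inv_cancel₀ <| Nat.cast_ne_zero.2 hcard).symm
  · simp_all

namespace Sylow

variable {p : ℕ} {G : Type*} [Group G]

theorem conj_mem_smul_iff {g x : G} {Q : Sylow p G} : g * x * g⁻¹ ∈ g • Q ↔ x ∈ Q :=
  smul_mem_pointwise_smul_iff (a := MulAut.conj g)

theorem exists_mem_iff_orderOf_eq_pow [Finite G] [Fact p.Prime] {x : G} :
    (∃ Q : Sylow p G, x ∈ Q) ↔ ∃ n, orderOf x = p ^ n := by
  constructor
  · rintro ⟨Q, hx⟩
    simpa using Q.isPGroup'.exists_orderOf_eq_pow ⟨x, hx⟩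
  · rintro ⟨n, hn⟩
    have hx : IsPGroup p (zpowers x) := IsPGroup.of_card (n := n) (by rw [Nat.card_zpowers, hn])
    obtain ⟨Q, hQ⟩ := hx.exists_le_sylow
    exact ⟨Q, hQ (mem_zpowers x)⟩

theorem finsum_mem_eq_of_conj_invariant [Fact p.Prime] [Finite (Sylow p G)] {M : Type*}
    [AddCommMonoid M] {f : G → M} (hf : ∀ g x, f (g * x * g⁻¹) = f x) (P Q : Sylow p G) :
    ∑ᶠ x ∈ (P : Set G), f x = ∑ᶠ x ∈ (Q : Set G), f x := by
  obtain ⟨g, rfl⟩ := MulAction.exists_smul_eq G P Q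
  refine finsum_mem_eq_of_bijOn (fun x => g * x * g⁻¹) ?_ fun x _ => (hf g x).symm
  rw [coe_smul, ← Set.image_smul]
  exact (MulAut.conj g).injective.injOn.bijOn_image

end Sylow

theorem sylCount_conj {p : ℕ} {G : Type*} [Group G] (g x : G) :
    sylCount p (g * x * g⁻¹) = sylCount p x :=
  Nat.card_congr <| Equiv.subtypeEquiv (MulAction.toPerm g⁻¹) fun Q => by
    simpa [mul_assoc] using (Sylow.conj_mem_smul_iff (g := g⁻¹) (x := g * x * g⁻¹) (Q := Q)).symm

/-- `|𝔘_p(G)| = Σ_{x ∈ P} n_p(G) / λ_G(x)` (a sum of rational numbers). -/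
theorem card_pElements_eq_sum_lambda {G : Type*} [Group G] [Fintype G]
    (p : ℕ) (hp : p.Prime) (P : Sylow p G) :
    (Nat.card {g : G | ∃ n : ℕ, orderOf g = p ^ n} : ℚ) =
      ∑ᶠ x ∈ ((P : Subgroup G) : Set G),
        (Nat.card (Sylow p G) : ℚ) / (sylCount p x : ℚ) := by
  have := Fact.mk hp
  calc (Nat.card {g : G | ∃ n : ℕ, orderOf g = p ^ n} : ℚ)
      = Nat.card {x : G | ∃ Q : Sylow p G, x ∈ Q} := by
        simp_rw [Sylow.exists_mem_iff_orderOf_eq_pow]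
    _ = ∑ᶠ Q : Sylow p G, ∑ᶠ x ∈ (Q : Set G), (sylCount p x : ℚ)⁻¹ :=
        Nat.card_setOf_exists_eq_finsum_finsum_inv_card _
    _ = ∑ᶠ _ : Sylow p G, ∑ᶠ x ∈ (P : Set G), (sylCount p x : ℚ)⁻¹ :=
        finsum_congr fun Q =>
          Sylow.finsum_mem_eq_of_conj_invariant (fun g x => by rw [sylCount_conj]) Q P
    _ = Nat.card (Sylow p G) * ∑ᶠ x ∈ (P : Set G), (sylCount p x : ℚ)⁻¹ := by
        rw [finsum_eq_sum_of_fintype, sum_const, card_univ, nsmul_eq_mul,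
          Nat.card_eq_fintype_card]
    _ = _ := by
        simp_rw [mul_finsum_mem, div_eq_mul_inv]
        rfl
end

section
/- Let G be a finite group, p a prime, H a subgroup of G, and x ∈ H a p-element. Then λ_G(x)/n_p(G) ≤ λ_H(x)/n_p(H), i.e., λ_G(x) · n_p(H) ≤ λ_H(x) · n_p(G). Moreover, if H is normal in G, then equality holds: λ_G(x) · n_p(H) = λ_H(x) · n_p(G). -/
/-! Fix a Sylow subgroup `P` of `G`. The Sylow subgroups containing `x` are the conjugates
`g • P` with `g⁻¹ x g ∈ P`, and each of them arises from exactly `|N_G(P)| = |G| / n_p(G)` such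
`g`, so `λ_G(x) / n_p(G) = #{g | g⁻¹ x g ∈ P} / |G|`. Writing `g = h t` with `h ∈ H` turns
`|H| · #{g | g⁻¹ x g ∈ P}` into `∑_t #{h ∈ H | h⁻¹ x h ∈ tPt⁻¹ ∩ H}`. Each `tPt⁻¹ ∩ H` is a
`p`-subgroup of `H`, hence lies in a Sylow subgroup of `H`, and the same identity inside `H`
bounds every summand by `λ_H(x) |H| / n_p(H)`. When `H` is normal, `tPt⁻¹ ∩ H` is itself a
Sylow subgroup of `H`, so every bound is attained. -/

open Subgroup

open scoped Pointwise

theorem MulAction.card_smul_mem_mul_card_eq {G X : Type*} [Group G] [Finite G] [MulAction G X]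
    [IsPretransitive G X] (a : X) (s : Set X) :
    Nat.card {g : G // g • a ∈ s} * Nat.card X = Nat.card s * Nat.card G := by
  choose σ hσ using exists_smul_eq G a
  let e : {g : G // g • a ∈ s} ≃ s × stabilizer G a :=
    { toFun g := (⟨(g : G) • a, g.2⟩, ⟨(σ ((g : G) • a))⁻¹ * g, by
        rw [mem_stabilizer_iff, mul_smul, inv_smul_eq_iff, hσ]⟩)
      invFun yh := ⟨σ yh.1 * yh.2, by rw [mul_smul, yh.2.2, hσ]; exact yh.1.2⟩
      left_inv g := by simp
      right_inv yh := by
        have h : (σ yh.1 * yh.2) • a = yh.1 := by rw [mul_smul, yh.2.2, hσ]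
        ext <;> simp [h] }
  rw [Nat.card_congr e, Nat.card_prod, ← index_stabilizer_of_transitive G a, mul_assoc,
    card_mul_index]

theorem Subgroup.mem_conj_smul_iff {G : Type*} [Group G] {K : Subgroup G} {t y : G} :
    y ∈ MulAut.conj t • K ↔ t⁻¹ * y * t ∈ K := by
  rw [mem_pointwise_smul_iff_inv_smul_mem]
  simp only [MulAut.smul_def, MulAut.inv_apply, MulAut.conj_symm_apply]

theorem Sylow.mem_smul_iff {p : ℕ} {G : Type*} [Group G] {P : Sylow p G} {g x : G} :
    x ∈ g • P ↔ g⁻¹ * x * g ∈ (P : Subgroup G) :=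
  mem_conj_smul_iff

theorem Sylow.card_conj_mem_mul_card_sylow {p : ℕ} {G : Type*} [Group G] [Finite G]
    [Fact p.Prime] (P : Sylow p G) (x : G) :
    Nat.card {g : G // g⁻¹ * x * g ∈ (P : Subgroup G)} * Nat.card (Sylow p G) =
      sylCount p x * Nat.card G := by
  simp_rw [← Sylow.mem_smul_iff]
  exact MulAction.card_smul_mem_mul_card_eq P {Q | x ∈ Q}

theorem IsPGroup.card_conj_mem_mul_card_sylow_le {p : ℕ} {G : Type*} [Group G] [Finite G]
    [Fact p.Prime] {K : Subgroup G} (hK : IsPGroup p K) (x : G) :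
    Nat.card {g : G // g⁻¹ * x * g ∈ K} * Nat.card (Sylow p G) ≤ sylCount p x * Nat.card G := by
  obtain ⟨P, hKP⟩ := hK.exists_le_sylow
  rw [← P.card_conj_mem_mul_card_sylow x]
  gcongr
  exact Nat.card_le_card_of_injective (Subtype.impEmbedding _ _ fun g hg => hKP hg)
    (Subtype.impEmbedding _ _ _).injective

theorem Subgroup.card_mul_card_conj_mem {G : Type*} [Group G] [Fintype G] (H K : Subgroup G)
    (x : G) :
    Nat.card H * Nat.card {g : G // g⁻¹ * x * g ∈ K} =
      ∑ t : G, Nat.card {h : H // (h : G)⁻¹ * x * h ∈ MulAut.conj t • K} := by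
  have hmem (h t : G) : (h * t)⁻¹ * x * (h * t) ∈ K ↔ h⁻¹ * x * h ∈ MulAut.conj t • K := by
    rw [mem_conj_smul_iff]
    group
  let e : (Σ t : G, {h : H // (h : G)⁻¹ * x * h ∈ MulAut.conj t • K}) ≃
      H × {g : G // g⁻¹ * x * g ∈ K} :=
    { toFun th := (th.2, ⟨th.2 * th.1, (hmem _ _).2 th.2.2⟩)
      invFun hg := ⟨(hg.1 : G)⁻¹ * hg.2, hg.1, (hmem _ _).1 (by simpa using hg.2.2)⟩
      left_inv th := Sigma.subtype_ext (by simp) rfl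
      right_inv hg := by simp }
  rw [← Nat.card_prod, ← Nat.card_congr e, Nat.card_sigma]

-- Some conjugate of a Sylow subgroup of `N` lies in the `p`-group `P ∩ N`, so equals it by
-- maximality.
theorem Sylow.exists_coe_eq_subgroupOf {p : ℕ} {G : Type*} [Group G] [Finite G] [Fact p.Prime]
    (P : Sylow p G) (N : Subgroup G) [N.Normal] :
    ∃ Q : Sylow p N, (Q : Subgroup N) = (P : Subgroup G).subgroupOf N := by
  obtain ⟨Q⟩ : Nonempty (Sylow p N) := inferInstance
  obtain ⟨R, hQR⟩ := (Q.2.map N.subtype).exists_le_sylow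
  obtain ⟨g, rfl⟩ := MulAction.exists_smul_eq G P R
  refine ⟨MulAut.conjNormal (H := N) g⁻¹ • Q, (Sylow.is_maximal' _ P.2.comap_subtype ?_).symm⟩
  intro y hy
  change y ∈ MulAut.conjNormal (H := N) g⁻¹ • (Q : Subgroup N) at hy
  rw [mem_pointwise_smul_iff_inv_smul_mem, ← map_inv, inv_inv] at hy
  have hgy : ((MulAut.conjNormal g y : N) : G) ∈ g • P := hQR (mem_map_of_mem N.subtype hy)
  simp only [Sylow.mem_smul_iff, MulAut.conjNormal_apply, mul_assoc, inv_mul_cancel_left,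
    inv_mul_cancel, mul_one] at hgy
  exact hgy

namespace Sylow

variable {p : ℕ} {G : Type*} [Group G] [Fintype G] [Fact p.Prime] {H : Subgroup G} {x : G}

theorem card_conj_mem_mul_card_sylow_subgroup_le (P : Sylow p G) (hx : x ∈ H) :
    Nat.card {g : G // g⁻¹ * x * g ∈ (P : Subgroup G)} * Nat.card (Sylow p H) ≤
      sylCount p (⟨x, hx⟩ : H) * Nat.card G := by
  refine Nat.le_of_mul_le_mul_left ?_ (Nat.card_pos (α := H))
  calc Nat.card H * (Nat.card {g : G // g⁻¹ * x * g ∈ (P : Subgroup G)} * Nat.card (Sylow p H))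
      = ∑ t : G, Nat.card {h : H // (h : G)⁻¹ * x * h ∈ MulAut.conj t • (P : Subgroup G)} *
          Nat.card (Sylow p H) := by
        rw [← mul_assoc, H.card_mul_card_conj_mem, Finset.sum_mul]
    _ ≤ ∑ _t : G, sylCount p (⟨x, hx⟩ : H) * Nat.card H :=
        Finset.sum_le_sum fun t _ =>
          (t • P).2.comap_subtype.card_conj_mem_mul_card_sylow_le (⟨x, hx⟩ : H)
    _ = Nat.card H * (sylCount p (⟨x, hx⟩ : H) * Nat.card G) := by
        rw [Finset.sum_const, Finset.card_univ, ← Nat.card_eq_fintype_card, smul_eq_mul]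
        ring

theorem card_conj_mem_mul_card_sylow_subgroup_eq_of_normal [H.Normal] (P : Sylow p G) (hx : x ∈ H) :
    Nat.card {g : G // g⁻¹ * x * g ∈ (P : Subgroup G)} * Nat.card (Sylow p H) =
      sylCount p (⟨x, hx⟩ : H) * Nat.card G := by
  have hterm (t : G) :
      Nat.card {h : H // (h : G)⁻¹ * x * h ∈ MulAut.conj t • (P : Subgroup G)} *
        Nat.card (Sylow p H) = sylCount p (⟨x, hx⟩ : H) * Nat.card H := by
    obtain ⟨Q, hQ⟩ := (t • P).exists_coe_eq_subgroupOf H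
    have hmem (h : H) : (h : G)⁻¹ * x * h ∈ MulAut.conj t • (P : Subgroup G) ↔
        h⁻¹ * ⟨x, hx⟩ * h ∈ (Q : Subgroup H) := by
      rw [hQ]; rfl
    rw [Nat.card_congr (Equiv.subtypeEquivRight hmem), Q.card_conj_mem_mul_card_sylow]
  refine Nat.eq_of_mul_eq_mul_left (Nat.card_pos (α := H)) ?_
  rw [← mul_assoc, H.card_mul_card_conj_mem, Finset.sum_mul,
    Finset.sum_congr rfl fun t _ => hterm t, Finset.sum_const, Finset.card_univ,
    ← Nat.card_eq_fintype_card, smul_eq_mul]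
  ring

end Sylow

theorem lambda_ratio_le_of_subgroup_general {G : Type*} [Group G] [Fintype G]
    (p : ℕ) (hp : p.Prime) (H : Subgroup G) (x : G) (hx : x ∈ H) :
    sylCount p x * Nat.card (Sylow p H) ≤
      Nat.card {Q : Sylow p H // (⟨x, hx⟩ : H) ∈ Q} * Nat.card (Sylow p G) ∧
      (H.Normal →
        sylCount p x * Nat.card (Sylow p H) =
          Nat.card {Q : Sylow p H // (⟨x, hx⟩ : H) ∈ Q} * Nat.card (Sylow p G)) := by
  have : Fact p.Prime := ⟨hp⟩
  obtain ⟨P⟩ : Nonempty (Sylow p G) := inferInstance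
  have hP : sylCount p x * Nat.card (Sylow p H) * Nat.card G =
      Nat.card {g : G // g⁻¹ * x * g ∈ (P : Subgroup G)} * Nat.card (Sylow p H) *
        Nat.card (Sylow p G) := by
    rw [mul_right_comm, ← P.card_conj_mem_mul_card_sylow x]
    ring
  refine ⟨Nat.le_of_mul_le_mul_right ?_ (Nat.card_pos (α := G)),
    fun _ => Nat.eq_of_mul_eq_mul_right (Nat.card_pos (α := G)) ?_⟩
  · rw [hP, mul_right_comm _ (Nat.card (Sylow p G))]
    exact Nat.mul_le_mul_right _ (P.card_conj_mem_mul_card_sylow_subgroup_le hx)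
  · rw [hP, mul_right_comm _ (Nat.card (Sylow p G)),
      P.card_conj_mem_mul_card_sylow_subgroup_eq_of_normal hx]
    rfl

/-- Lemma: for a subgroup `H ≤ G` and a `p`-element `x ∈ H`,
`λ_G(x)/n_p(G) ≤ λ_H(x)/n_p(H)`, i.e. `λ_G(x) · n_p(H) ≤ λ_H(x) · n_p(G)`;
and if `H` is normal in `G` then equality holds. -/
theorem lambda_ratio_le_of_subgroup {G : Type*} [Group G] [Fintype G]
    (p : ℕ) (hp : p.Prime) (H : Subgroup G) (x : G) (hx : x ∈ H)
    (hxp : ∃ n : ℕ, orderOf x = p ^ n) :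
    sylCount p x * Nat.card (Sylow p H) ≤
      Nat.card {Q : Sylow p H // (⟨x, hx⟩ : H) ∈ Q} * Nat.card (Sylow p G) ∧
      (H.Normal →
        sylCount p x * Nat.card (Sylow p H) =
          Nat.card {Q : Sylow p H // (⟨x, hx⟩ : H) ∈ Q} * Nat.card (Sylow p G)) :=
  lambda_ratio_le_of_subgroup_general p hp H x hx
end

section
/- Let G be a finite group, p a prime, N a normal subgroup of G, P a Sylow p-subgroup of G, and x ∈ P. Then λ_G(x) = λ_{G/N}(xN) · λ_{NP}(x), where NP is the subgroup of G generated by N and P, λ_{NP}(x) is the number of Sylow p-subgroups of NP containing x, and λ_{G/N}(xN) is the number of Sylow p-subgroups of the quotient G/N containing the coset xN. -/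
open Subgroup

/-!
Reduction modulo `N` maps `Syl_p(G)` onto `Syl_p(G/N)`, and its fibre over `QN/N` is the set of
Sylow subgroups of `G` inside `NQ`, i.e. `Syl_p(NQ)`; those containing `x` lie over the Sylow
subgroups of `G/N` containing `xN`. So it suffices that `λ_{NQ}(x)` does not depend on `Q` as long
as `x ∈ NQ`. By the Frattini argument `N`, hence `W = N⟨x⟩`, acts transitively on `Syl_p(NQ)`, so
`R ↦ R ∩ W` is a `W`-equivariant map `Syl_p(NQ) → Syl_p(W)` with fibres of constant size, and
`λ_{NQ}(x) · n_p(W) = λ_W(x) · n_p(NQ)`. Finally `n_p(NQ)` does not depend on `Q`, the subgroups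
`NQ` being conjugate.
-/

theorem Nat.card_subtype_eq_mul_of_card_fiber {α β : Type*} [Finite α] [Finite β] (f : α → β)
    {P : α → Prop} {Q : β → Prop} (hPQ : ∀ a, P a → Q (f a)) {c : ℕ}
    (hc : ∀ b, Q b → Nat.card {a // P a ∧ f a = b} = c) :
    Nat.card {a // P a} = Nat.card {b // Q b} * c := by
  have : Fintype {b // Q b} := Fintype.ofFinite _
  let g : {a // P a} → {b // Q b} := fun a => ⟨f a, hPQ a a.2⟩
  have hfiber (b : {b // Q b}) : Nat.card {a // g a = b} = c := by
    rw [← hc b b.2]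
    exact Nat.card_congr ((Equiv.subtypeEquivRight fun a => Subtype.ext_iff).trans
      (Equiv.subtypeSubtypeEquivSubtypeInter P (fun a => f a = b)))
  rw [← Nat.card_congr (Equiv.sigmaFiberEquiv g), Nat.card_sigma]
  simp [hfiber]

open Pointwise

section ComapSylow

variable {p : ℕ} {W K : Type*} [Group W] [Group K]

theorem Subgroup.comap_conj_smul (ι : W →* K) (w : W) (H : Subgroup K) :
    (MulAut.conj (ι w) • H).comap ι = MulAut.conj w • H.comap ι := by
  ext v
  simp [mem_pointwise_smul_iff_inv_smul_mem]

variable (ι : W →* K)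

noncomputable def Sylow.comapOfTransitive (hι : Function.Injective ι)
    (htrans : ∀ R R' : Sylow p K, ∃ w, ι w • R = R') (R : Sylow p K) : Sylow p W where
  toSubgroup := (R : Subgroup K).comap ι
  isPGroup' := R.2.comap_of_injective ι hι
  is_maximal' := by
    -- `R` is a `ι W`-conjugate of a Sylow subgroup whose pullback is Sylow.
    obtain ⟨R₀, hR₀⟩ := (default : Sylow p W).exists_comap_eq_of_injective hι
    obtain ⟨w, rfl⟩ := htrans R₀ R
    rw [Sylow.coe_subgroup_smul, comap_conj_smul, hR₀]
    exact (w • (default : Sylow p W)).3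

theorem Sylow.comapOfTransitive_smul (hι : Function.Injective ι)
    (htrans : ∀ R R' : Sylow p K, ∃ w, ι w • R = R') (w : W) (R : Sylow p K) :
    Sylow.comapOfTransitive ι hι htrans (ι w • R) = w • Sylow.comapOfTransitive ι hι htrans R :=
  Sylow.ext (comap_conj_smul ι w R)

theorem Sylow.card_mem_mul_card_eq_of_transitive [Fact p.Prime] [Finite W] [Finite K]
    (hι : Function.Injective ι) (htrans : ∀ R R' : Sylow p K, ∃ w, ι w • R = R') (y : W) :
    Nat.card {R : Sylow p K // ι y ∈ R} * Nat.card (Sylow p W) =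
      Nat.card {T : Sylow p W // y ∈ T} * Nat.card (Sylow p K) := by
  let f := Sylow.comapOfTransitive ι hι htrans
  obtain ⟨T₀⟩ := Sylow.nonempty (p := p) (G := W)
  have hfiber (T : Sylow p W) : Nat.card {R // f R = T} = Nat.card {R // f R = T₀} := by
    obtain ⟨w, rfl⟩ := MulAction.exists_smul_eq W T₀ T
    refine (Nat.card_congr (Equiv.subtypeEquiv (MulAction.toPerm (ι w)) fun R => ?_)).symm
    rw [MulAction.toPerm_apply, show f (ι w • R) = w • f R from comapOfTransitive_smul ..,
      smul_left_cancel_iff]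
  have hcount (y : W) : Nat.card {R : Sylow p K // ι y ∈ R} =
      Nat.card {T : Sylow p W // y ∈ T} * Nat.card {R // f R = T₀} :=
    Nat.card_subtype_eq_mul_of_card_fiber f (P := fun R => ι y ∈ R) (Q := fun T => y ∈ T)
      (fun R hR => hR) fun T hT => by
      rw [← hfiber T]
      exact Nat.card_congr (Equiv.subtypeEquivRight fun R =>
        ⟨And.right, fun hRT => ⟨show y ∈ f R from hRT ▸ hT, hRT⟩⟩)
  have htotal := hcount 1
  simp only [map_one, one_mem, Nat.card_subtype_true] at htotal
  rw [hcount y, htotal]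
  ring

end ComapSylow

section Frattini

variable {p : ℕ} [Fact p.Prime] {K : Type*} [Group K] [Finite K]

theorem Sylow.exists_mem_smul_eq_of_sup_eq_top {M : Subgroup K} [M.Normal] {R₀ : Sylow p K}
    (h : M ⊔ R₀ = ⊤) (R R' : Sylow p K) : ∃ m ∈ M, m • R = R' := by
  have hconj (R : Sylow p K) : ∃ m ∈ M, m • R₀ = R := by
    obtain ⟨k, rfl⟩ := MulAction.exists_smul_eq K R₀ R
    obtain ⟨m, hm, r, hr, rfl⟩ := mem_sup_of_normal_left.1 (h ▸ mem_top k)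
    exact ⟨m, hm, by rw [mul_smul, smul_eq_iff_mem_normalizer.2 (le_normalizer hr)]⟩
  obtain ⟨m, hm, rfl⟩ := hconj R
  obtain ⟨m', hm', rfl⟩ := hconj R'
  exact ⟨m' * m⁻¹, mul_mem hm' (inv_mem hm), by rw [mul_smul, inv_smul_smul]⟩

end Frattini

section SylowInSubgroup

variable {p : ℕ} [Fact p.Prime] {G : Type*} [Group G] [Finite G] {H : Subgroup G}
  {Q₀ : Sylow p G}

theorem Sylow.subtype_bijective (hQ₀ : ↑Q₀ ≤ H) :
    Function.Bijective fun Q : {Q : Sylow p G // ↑Q ≤ H} => Q.1.subtype Q.2 := by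
  refine ⟨fun Q Q' h => Subtype.ext (subtype_injective h), fun R => ?_⟩
  obtain ⟨h, rfl⟩ := MulAction.exists_smul_eq H (Q₀.subtype hQ₀) R
  exact ⟨⟨h • Q₀, smul_le hQ₀ h⟩, (smul_subtype hQ₀ h).symm⟩

theorem Sylow.card_subtype_le (hQ₀ : ↑Q₀ ≤ H) :
    Nat.card {Q : Sylow p G // ↑Q ≤ H} = Nat.card (Sylow p H) :=
  Nat.card_congr (Equiv.ofBijective _ (subtype_bijective hQ₀))

theorem Sylow.card_subtype_le_and_mem (hQ₀ : ↑Q₀ ≤ H) {x : G} (hx : x ∈ H) :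
    Nat.card {Q : Sylow p G // ↑Q ≤ H ∧ x ∈ Q} = Nat.card {R : Sylow p H // ⟨x, hx⟩ ∈ R} :=
  Nat.card_congr ((Equiv.subtypeSubtypeEquivSubtypeInter _ _).symm.trans
    (Equiv.subtypeEquiv (Equiv.ofBijective _ (subtype_bijective hQ₀)) fun _ => Iff.rfl))

end SylowInSubgroup

section Quotient

variable {p : ℕ} [Fact p.Prime] {G : Type*} [Group G] [Finite G] (N : Subgroup G) [N.Normal]

theorem Sylow.comap_mapSurjective_mk' (Q : Sylow p G) :
    (Q.mapSurjective (QuotientGroup.mk'_surjective N) : Subgroup (G ⧸ N)).comap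
      (QuotientGroup.mk' N) = N ⊔ Q := by
  rw [coe_mapSurjective, comap_map_eq, QuotientGroup.ker_mk', sup_comm]

theorem Sylow.mapSurjective_mk'_eq_iff_le_sup (Q Q' : Sylow p G) :
    Q'.mapSurjective (QuotientGroup.mk'_surjective N) =
        Q.mapSurjective (QuotientGroup.mk'_surjective N) ↔ ↑Q' ≤ N ⊔ Q := by
  rw [← comap_mapSurjective_mk' N Q, ← map_le_iff_le_comap,
    ← coe_mapSurjective (QuotientGroup.mk'_surjective N)]
  exact ⟨le_of_eq ∘ congrArg _,
    fun h => Sylow.ext ((Q'.mapSurjective _).3 (Q.mapSurjective _).2 h).symm⟩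

theorem card_sylow_normal_sup_eq (Q Q' : Sylow p G) :
    Nat.card (Sylow p ↥(N ⊔ Q)) = Nat.card (Sylow p ↥(N ⊔ Q')) := by
  obtain ⟨g, rfl⟩ := MulAction.exists_smul_eq G Q Q'
  rw [← Sylow.card_subtype_le le_sup_right, ← Sylow.card_subtype_le le_sup_right]
  have hconj : N ⊔ ↑(g • Q) = MulAut.conj g • (N ⊔ Q) := by
    rw [smul_sup, Normal.conj_smul_eq_self, Sylow.coe_subgroup_smul]
  exact Nat.card_congr (Equiv.subtypeEquiv (MulAction.toPerm g) fun R => by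
    rw [MulAction.toPerm_apply, hconj, Sylow.coe_subgroup_smul,
      pointwise_smul_le_pointwise_smul_iff])

theorem card_sylow_mem_normal_sup_mul_card_eq (Q : Sylow p G) {x : G} (hx : x ∈ N ⊔ Q) :
    Nat.card {R : Sylow p ↥(N ⊔ Q) // ⟨x, hx⟩ ∈ R} * Nat.card (Sylow p ↥(N ⊔ zpowers x)) =
      Nat.card {T : Sylow p ↥(N ⊔ zpowers x) // ⟨x, mem_sup_right (mem_zpowers x)⟩ ∈ T} *
        Nat.card (Sylow p ↥(N ⊔ Q)) := by
  have hle : N ⊔ zpowers x ≤ N ⊔ Q := sup_le le_sup_left (zpowers_le.2 hx)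
  refine Sylow.card_mem_mul_card_eq_of_transitive (p := p) (inclusion hle)
    (inclusion_injective hle) (fun R R' => ?_) ⟨x, mem_sup_right (mem_zpowers x)⟩
  obtain ⟨m, hm, rfl⟩ := Sylow.exists_mem_smul_eq_of_sup_eq_top
    (R₀ := Q.subtype le_sup_right) (codisjoint_iff.1 (codisjoint_subgroupOf_sup N Q)) R R'
  exact ⟨⟨m, mem_sup_left hm⟩, rfl⟩

theorem card_sylow_mem_normal_sup_eq (Q Q' : Sylow p G) {x : G} (hx : x ∈ N ⊔ Q)
    (hx' : x ∈ N ⊔ Q') :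
    Nat.card {R : Sylow p ↥(N ⊔ Q) // ⟨x, hx⟩ ∈ R} =
      Nat.card {R : Sylow p ↥(N ⊔ Q') // ⟨x, hx'⟩ ∈ R} := by
  have hpos : 0 < Nat.card (Sylow p ↥(N ⊔ zpowers x)) := Nat.card_pos
  refine Nat.eq_of_mul_eq_mul_right hpos ?_
  rw [card_sylow_mem_normal_sup_mul_card_eq N Q hx,
    card_sylow_mem_normal_sup_mul_card_eq N Q' hx', card_sylow_normal_sup_eq N Q Q']

theorem card_sylow_mem_and_mapSurjective_mk'_eq (Q₀ : Sylow p G) {x : G} (hx : x ∈ N ⊔ Q₀) :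
    Nat.card {Q : Sylow p G // x ∈ Q ∧
        Q.mapSurjective (QuotientGroup.mk'_surjective N) =
          Q₀.mapSurjective (QuotientGroup.mk'_surjective N)} =
      Nat.card {R : Sylow p ↥(N ⊔ Q₀) // ⟨x, hx⟩ ∈ R} := by
  rw [← Sylow.card_subtype_le_and_mem le_sup_right hx]
  exact Nat.card_congr (Equiv.subtypeEquivRight fun Q => by
    rw [Sylow.mapSurjective_mk'_eq_iff_le_sup, and_comm])

end Quotient

/-- Lemma: if `N ⊴ G`, `P` is a Sylow `p`-subgroup of `G` and `x ∈ P`, then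
`λ_G(x) = λ_{G/N}(xN) · λ_{NP}(x)`. -/
theorem lambda_eq_lambda_quotient_mul_lambda_sup {G : Type*} [Group G] [Fintype G]
    (p : ℕ) (hp : p.Prime) (N : Subgroup G) (hN : N.Normal)
    (P : Sylow p G) (x : G) (hx : x ∈ P) :
    sylCount p x =
      Nat.card {Q : Sylow p (G ⧸ N) // (x : G ⧸ N) ∈ Q} *
        Nat.card {Q : Sylow p ↥(N ⊔ (P : Subgroup G)) //
          (⟨x, Subgroup.mem_sup_right hx⟩ : ↥(N ⊔ (P : Subgroup G))) ∈ Q} := by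
  have := Fact.mk hp
  refine Nat.card_subtype_eq_mul_of_card_fiber
    (fun Q : Sylow p G => Q.mapSurjective (QuotientGroup.mk'_surjective N))
    (P := fun Q => x ∈ Q) (fun Q hQ => mem_map_of_mem _ hQ) fun S hS => ?_
  obtain ⟨Q₀, rfl⟩ := Sylow.mapSurjective_surjective (QuotientGroup.mk'_surjective N) p S
  have hxQ₀ : x ∈ N ⊔ Q₀ := by rwa [← Sylow.comap_mapSurjective_mk' N Q₀]
  rw [card_sylow_mem_and_mapSurjective_mk'_eq N Q₀ hxQ₀, card_sylow_mem_normal_sup_eq N Q₀ P]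
end

section
/- Let L be a finite group, p a prime, k a positive integer, and M = L^k the direct product of k copies of L (i.e., the group of functions Fin k → L). Let σ be a permutation of {1, …, k} and let φ be an automorphism of M that maps the i-th coordinate factor onto the σ(i)-th coordinate factor for every i. Then the number of Sylow p-subgroups Q of M with φ(Q) = Q is at most n_p(L)^s, where s is the number of orbits of ⟨σ⟩ on {1, …, k}. -/
/-!
A Sylow `p`-subgroup `Q` of `L^k` is the product of its coordinate projections, and these are
Sylow subgroups of `L`. Moreover `Q ⊓ (factor i)` is the `i`-th projection of `Q` placed in
coordinate `i`. If `φ Q = Q`, then `φ` carries `Q ⊓ (factor i)` onto `Q ⊓ (factor σ(i))`, so the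
projection of `Q` at `σ(i)` is determined by the one at `i`. Hence `Q` is determined by its
projections at one representative of each `⟨σ⟩`-orbit.
-/

open Subgroup

theorem IsPGroup.pi {ι : Type*} [Finite ι] {G : ι → Type*} [∀ i, Group (G i)] {p : ℕ}
    {H : ∀ i, Subgroup (G i)} (hH : ∀ i, IsPGroup p (H i)) : IsPGroup p (pi Set.univ H) := by
  intro g
  choose n hn using fun i => hH i ⟨g.1 i, g.2 i (Set.mem_univ i)⟩
  obtain ⟨N, hN⟩ := Finite.exists_le n
  refine ⟨N, Subtype.ext <| funext fun i => ?_⟩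
  have hi : orderOf (g.1 i) ∣ p ^ n i := orderOf_dvd_of_pow_eq_one (congrArg Subtype.val (hn i))
  exact orderOf_dvd_iff_pow_eq_one.mp (hi.trans (pow_dvd_pow p (hN i)))

theorem Subgroup.pi_inf_range_mulSingle {ι : Type*} [DecidableEq ι] {G : ι → Type*}
    [∀ i, Group (G i)] (H : ∀ i, Subgroup (G i)) (i : ι) :
    pi Set.univ H ⊓ (MonoidHom.mulSingle G i).range = (H i).map (MonoidHom.mulSingle G i) := by
  ext x
  simp only [mem_inf, MonoidHom.mem_range, mem_map, MonoidHom.mulSingle_apply]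
  constructor
  · rintro ⟨hx, y, rfl⟩
    exact ⟨y, by simpa using hx, rfl⟩
  · rintro ⟨y, hy, rfl⟩
    exact ⟨by simpa using hy, y, rfl⟩

theorem Equiv.Perm.forall_of_forall_orbitRel_out {α : Type*} [Finite α] {σ : Equiv.Perm α}
    {P : α → Prop} (hσ : ∀ a, P a → P (σ a))
    (hout : ∀ o : MulAction.orbitRel.Quotient (zpowers σ) α, P o.out) (a : α) : P a := by
  set o : MulAction.orbitRel.Quotient (zpowers σ) α := Quotient.mk'' a
  have hmem : a ∈ MulAction.orbit (zpowers σ) o.out :=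
    MulAction.mem_orbit_symm.mp (Quotient.exact (Quotient.out_eq o))
  obtain ⟨⟨_, m, rfl⟩, hm⟩ := hmem
  obtain ⟨n, hn⟩ := (show σ.SameCycle o.out a from ⟨m, hm⟩).exists_nat_pow_eq
  rw [← hn]
  clear hm hn
  induction n with
  | zero => exact hout o
  | succ n ih => rw [pow_succ', Equiv.Perm.mul_apply]; exact hσ _ ih

namespace Sylow

variable {ι : Type*} [Finite ι] {G : ι → Type*} [∀ i, Group (G i)] {p : ℕ}

theorem coe_eq_pi_map_eval (Q : Sylow p (∀ i, G i)) :
    (Q : Subgroup (∀ i, G i)) = pi Set.univ fun i => (Q : Subgroup _).map (Pi.evalMonoidHom G i) :=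
  (Q.is_maximal' (IsPGroup.pi fun _ => Q.isPGroup'.map _) fun q hq _ _ => ⟨q, hq, rfl⟩).symm

theorem inf_range_mulSingle [DecidableEq ι] (Q : Sylow p (∀ i, G i)) (i : ι) :
    (Q : Subgroup (∀ i, G i)) ⊓ (MonoidHom.mulSingle G i).range =
      ((Q : Subgroup _).map (Pi.evalMonoidHom G i)).map (MonoidHom.mulSingle G i) := by
  conv_lhs => rw [coe_eq_pi_map_eval Q]
  exact pi_inf_range_mulSingle _ i

variable [∀ i, Finite (G i)] [Fact p.Prime]

noncomputable def mapEval (Q : Sylow p (∀ i, G i)) (i : ι) : Sylow p (G i) :=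
  Q.mapSurjective (f := Pi.evalMonoidHom G i) fun x => by
    classical exact ⟨Pi.mulSingle i x, Pi.mulSingle_eq_same i x⟩

@[simp]
theorem coe_mapEval (Q : Sylow p (∀ i, G i)) (i : ι) :
    (Q.mapEval i : Subgroup (G i)) = (Q : Subgroup _).map (Pi.evalMonoidHom G i) :=
  rfl

theorem mapEval_injective :
    Function.Injective (mapEval : Sylow p (∀ i, G i) → ∀ i, Sylow p (G i)) := by
  intro Q Q' h
  ext1
  rw [coe_eq_pi_map_eval Q, coe_eq_pi_map_eval Q']
  exact congrArg (pi Set.univ) (funext fun i => congrArg Sylow.toSubgroup (congrFun h i))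

end Sylow

theorem Sylow.map_eval_perm_apply {ι L : Type*} [Finite ι] [DecidableEq ι] [Group L] {p : ℕ}
    {σ : Equiv.Perm ι} {φ : (ι → L) ≃* (ι → L)}
    (hφ : ∀ i, (MonoidHom.mulSingle (fun _ : ι => L) i).range.map φ.toMonoidHom =
        (MonoidHom.mulSingle (fun _ : ι => L) (σ i)).range)
    {Q : Sylow p (ι → L)} (hQ : (Q : Subgroup (ι → L)).map φ.toMonoidHom = Q) (i : ι) :
    (Q : Subgroup (ι → L)).map (Pi.evalMonoidHom _ (σ i)) =
      ((Q : Subgroup (ι → L)).map (Pi.evalMonoidHom _ i)).map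
        ((Pi.evalMonoidHom _ (σ i)).comp (φ.toMonoidHom.comp (MonoidHom.mulSingle _ i))) := by
  have hinf : ((Q : Subgroup (ι → L)) ⊓ (MonoidHom.mulSingle _ i).range).map φ.toMonoidHom =
      (Q : Subgroup (ι → L)) ⊓ (MonoidHom.mulSingle _ (σ i)).range := by
    rw [map_inf _ _ _ φ.injective, hQ, hφ i]
  rw [Q.inf_range_mulSingle, Q.inf_range_mulSingle] at hinf
  have hretract : (Pi.evalMonoidHom (fun _ : ι => L) (σ i)).comp
      (MonoidHom.mulSingle _ (σ i)) = MonoidHom.id L :=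
    MonoidHom.ext fun x => Pi.mulSingle_eq_same (M := fun _ : ι => L) (σ i) x
  rw [← map_map, ← map_map, hinf, map_map, hretract, map_id]

theorem card_invariant_sylow_le_general {L : Type*} [Group L] [Fintype L]
    (p : ℕ) (hp : p.Prime) (k : ℕ)
    (σ : Equiv.Perm (Fin k)) (φ : (Fin k → L) ≃* (Fin k → L))
    (hφ : ∀ i : Fin k,
      ((MonoidHom.mulSingle (fun _ : Fin k => L) i).range).map φ.toMonoidHom =
        (MonoidHom.mulSingle (fun _ : Fin k => L) (σ i)).range) :
    Nat.card {Q : Sylow p (Fin k → L) //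
        (Q : Subgroup (Fin k → L)).map φ.toMonoidHom = (Q : Subgroup (Fin k → L))} ≤
      Nat.card (Sylow p L) ^
        Nat.card (MulAction.orbitRel.Quotient (zpowers σ) (Fin k)) := by
  have := Fact.mk hp
  let restrict (Q : {Q : Sylow p (Fin k → L) // (Q : Subgroup (Fin k → L)).map φ.toMonoidHom = Q})
      (o : MulAction.orbitRel.Quotient (zpowers σ) (Fin k)) : Sylow p L :=
    Q.1.mapEval o.out
  have hrestrict : Function.Injective restrict := by
    intro Q Q' h
    refine Subtype.ext <| Sylow.mapEval_injective <| funext <|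
      σ.forall_of_forall_orbitRel_out ?_ (congrFun h)
    intro i hi
    ext1
    rw [Sylow.coe_mapEval, Sylow.coe_mapEval, Sylow.map_eval_perm_apply hφ Q.2,
      Sylow.map_eval_perm_apply hφ Q'.2, ← Sylow.coe_mapEval, ← Sylow.coe_mapEval, hi]
  calc _ ≤ Nat.card (MulAction.orbitRel.Quotient (zpowers σ) (Fin k) → Sylow p L) :=
        Nat.card_le_card_of_injective restrict hrestrict
    _ = _ := Nat.card_fun

/-- Lemma: let `M = L^k`, `σ` a permutation of the coordinates and `φ` an automorphism
of `M` mapping the `i`-th coordinate factor onto the `σ(i)`-th one for every `i`.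
Then the number of `φ`-invariant Sylow `p`-subgroups of `M` is at most `n_p(L)^s`,
where `s` is the number of orbits of `⟨σ⟩` on the coordinates. -/
theorem card_invariant_sylow_le {L : Type*} [Group L] [Fintype L]
    (p : ℕ) (hp : p.Prime) (k : ℕ) (hk : 0 < k)
    (σ : Equiv.Perm (Fin k)) (φ : (Fin k → L) ≃* (Fin k → L))
    (hφ : ∀ i : Fin k,
      ((MonoidHom.mulSingle (fun _ : Fin k => L) i).range).map φ.toMonoidHom =
        (MonoidHom.mulSingle (fun _ : Fin k => L) (σ i)).range) :
    Nat.card {Q : Sylow p (Fin k → L) //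
        (Q : Subgroup (Fin k → L)).map φ.toMonoidHom = (Q : Subgroup (Fin k → L))} ≤
      Nat.card (Sylow p L) ^
        Nat.card (MulAction.orbitRel.Quotient (zpowers σ) (Fin k)) :=
  card_invariant_sylow_le_general p hp k σ φ hφ
end

section
/- Let G be a finite group, p a prime, M a normal subgroup of G, P a Sylow p-subgroup of G, and set Q = P ∩ M. If X is a subgroup with Q ≤ X ≤ P, then N_M(P) ≤ N_M(X); that is, every element of M that normalizes P also normalizes X. -/
open Subgroup

/-! The commutator `⁅M ⊓ N_G(P), X⁆` lies in `M` because `M` is normal, and in `P` because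
`X ≤ P` and `N_G(P)` normalizes `P`; hence it lies in `P ⊓ M ≤ X`, which says exactly that
`M ⊓ N_G(P)` normalizes `X`. -/

theorem Subgroup.inf_normalizer_le_normalizer_of_inf_le {G : Type*} [Group G]
    {M P X : Subgroup G} [M.Normal] (hPMX : P ⊓ M ≤ X) (hXP : X ≤ P) :
    M ⊓ normalizer (P : Set G) ≤ normalizer (X : Set G) := by
  rw [le_normalizer_iff_commutator_le_right]
  have hM : ⁅M ⊓ normalizer (P : Set G), X⁆ ≤ M :=
    (commutator_mono inf_le_left le_rfl).trans (commutator_le_left M X)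
  have hP : ⁅M ⊓ normalizer (P : Set G), X⁆ ≤ P :=
    (commutator_mono inf_le_right hXP).trans
      (le_normalizer_iff_commutator_le_right.mp le_rfl)
  exact (le_inf hP hM).trans hPMX

theorem normalizer_inter_le_general {G : Type*} [Group G]
    (p : ℕ) (M : Subgroup G) (hM : M.Normal) (P : Sylow p G)
    (X : Subgroup G) (hQX : (P : Subgroup G) ⊓ M ≤ X) (hXP : X ≤ (P : Subgroup G)) :
    ∀ g ∈ M, g ∈ normalizer ((P : Subgroup G) : Set G) → g ∈ normalizer (X : Set G) :=
  fun _ hgM hgP => inf_normalizer_le_normalizer_of_inf_le hQX hXP ⟨hgM, hgP⟩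

/-- Lemma: if `M ⊴ G`, `P` is a Sylow `p`-subgroup, `Q = P ∩ M`, and `X` is a subgroup
with `Q ≤ X ≤ P`, then every element of `M` normalizing `P` also normalizes `X`,
i.e. `N_M(P) ≤ N_M(X)`. -/
theorem normalizer_inter_le {G : Type*} [Group G] [Fintype G]
    (p : ℕ) (hp : p.Prime) (M : Subgroup G) (hM : M.Normal) (P : Sylow p G)
    (X : Subgroup G) (hQX : (P : Subgroup G) ⊓ M ≤ X) (hXP : X ≤ (P : Subgroup G)) :
    ∀ g ∈ M, g ∈ normalizer ((P : Subgroup G) : Set G) → g ∈ normalizer (X : Set G) :=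
  normalizer_inter_le_general p M hM P X hQX hXP
end
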